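/- Let ⦀·⦀ be a norm on ℝ^d. The following two statements are equivalent: (i) the dual norm ⦀·⦀⋆ is orthant-strictly monotonic and the sequence of generalized top-k norms associated with ⦀·⦀ is strictly increasingly graded with respect to the ℓ0 pseudonorm (for every x ∈ ℝ^d and l ∈ {0,…,d}, ℓ0(x) ≤ l iff ⦀x⦀^top_l = ⦀x⦀^top_d); (ii) both the norm ⦀·⦀ and its dual norm ⦀·⦀⋆ are orthant-strictly monotonic. -/

import Mathlib

/-! Strict grading of the top-`l` norms of `N` and, when `N` is a norm, orthant-strict
monotonicity of `N` are both equivalent to: `N (x_K) < N x` whenever `K` misses a coordinate where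
`x` is nonzero. Under grading, `x_K = x_{K ∩ supp x}` has fewer than `l0 x` nonzero coordinates,
so `N (x_K)` is at most the top-`(l0 x - 1)` norm of `x`, which is strictly below the top-`d`
norm; applied to a maximizing `K`, this also shows that the top-`d` norm is `N x`. For a norm,
shrinking one coordinate of `x` towards `0` is a convex combination of `x` and `x` with that
coordinate erased, so the projection property gives orthant-strict monotonicity one coordinate
at a time. -/

open Finset Set

namespace OSMPaper

variable {d : ℕ}

/-- Standard inner product on `ℝ^d = Fin d → ℝ`. -/
def dot (x y : Fin d → ℝ) : ℝ := ∑ i, x i * y i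

/-- `N` is a norm on `ℝ^d`. -/
def IsNorm (N : (Fin d → ℝ) → ℝ) : Prop :=
  (∀ x, 0 ≤ N x) ∧ (∀ x, N x = 0 ↔ x = 0) ∧
  (∀ (c : ℝ) (x : Fin d → ℝ), N (c • x) = |c| * N x) ∧
  (∀ x y, N (x + y) ≤ N x + N y)

/-- `proj K x = x_K`, the vector coinciding with `x` on `K` and zero outside `K`. -/
def proj (K : Finset (Fin d)) (x : Fin d → ℝ) : Fin d → ℝ :=
  fun i => if i ∈ K then x i else 0

/-- The coordinate subspace `ℝ_K`. -/
def coordSubspace (K : Finset (Fin d)) : Set (Fin d → ℝ) :=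
  {x | ∀ j, j ∉ K → x j = 0}

/-- Orthant-monotonic norm. -/
def OrthantMonotonic (N : (Fin d → ℝ) → ℝ) : Prop :=
  ∀ x x' : Fin d → ℝ, (∀ i, |x i| ≤ |x' i|) → (∀ i, 0 ≤ x i * x' i) → N x ≤ N x'

/-- Orthant-strictly monotonic norm. -/
def OrthantStrictlyMonotonic (N : (Fin d → ℝ) → ℝ) : Prop :=
  ∀ x x' : Fin d → ℝ, (∀ i, |x i| ≤ |x' i|) → (∃ j, |x j| < |x' j|) →
    (∀ i, 0 ≤ x i * x' i) → N x < N x'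

/-- Dual norm `⦀y⦀⋆ = sup_{N x ≤ 1} ⟨x, y⟩`. -/
noncomputable def dualNorm (N : (Fin d → ℝ) → ℝ) (y : Fin d → ℝ) : ℝ :=
  sSup {r | ∃ x, N x ≤ 1 ∧ r = dot x y}

/-- Support function of a set `S`. -/
noncomputable def suppFn (S : Set (Fin d → ℝ)) (y : Fin d → ℝ) : ℝ :=
  sSup {r | ∃ x ∈ S, r = dot x y}

/-- Generalized top-`k` norm associated with the source norm `N`. -/
noncomputable def topNorm (N : (Fin d → ℝ) → ℝ) (k : ℕ) (x : Fin d → ℝ) : ℝ :=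
  sSup {r | ∃ K : Finset (Fin d), K.card ≤ k ∧ r = N (proj K x)}

/-- Generalized `k`-support norm: the dual norm of the generalized top-`k` norm. -/
noncomputable def supportNorm (N : (Fin d → ℝ) → ℝ) (k : ℕ) : (Fin d → ℝ) → ℝ :=
  dualNorm (topNorm N k)

/-- The ℓ0 pseudonorm: the number of nonzero components. -/
noncomputable def l0 (x : Fin d → ℝ) : ℕ := Set.ncard {i | x i ≠ 0}

/-- `x` is an extreme point of the convex set `C`. -/
def ExtremePt (C : Set (Fin d → ℝ)) (x : Fin d → ℝ) : Prop :=
  x ∈ C ∧ ∀ y ∈ C, ∀ z ∈ C, ∀ t : ℝ, 0 < t → t < 1 →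
    x = t • y + (1 - t) • z → y = x ∧ z = x

noncomputable def supp (x : Fin d → ℝ) : Finset (Fin d) := univ.filter (x · ≠ 0)

@[simp]
lemma mem_supp {x : Fin d → ℝ} {i : Fin d} : i ∈ supp x ↔ x i ≠ 0 := by
  simp [supp]

lemma l0_eq_card_supp (x : Fin d → ℝ) : l0 x = (supp x).card := by
  rw [l0, ← Set.ncard_coe_finset]
  congr 1
  ext i
  simp

lemma l0_le (x : Fin d → ℝ) : l0 x ≤ d := by
  simpa [l0_eq_card_supp] using card_le_univ (supp x)

lemma proj_inter_supp (K : Finset (Fin d)) (x : Fin d → ℝ) :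
    proj (K ∩ supp x) x = proj K x := by
  funext i
  by_cases hi : x i = 0 <;> simp [proj, hi]

lemma proj_eq_self_of_supp_subset {K : Finset (Fin d)} {x : Fin d → ℝ} (h : supp x ⊆ K) :
    proj K x = x := by
  funext i
  by_cases hi : i ∈ K
  · simp [proj, hi]
  · simpa [proj, hi, eq_comm] using mt (@h i) hi

lemma card_inter_supp_lt_l0 {K : Finset (Fin d)} {x : Fin d → ℝ} (h : ¬ supp x ⊆ K) :
    (K ∩ supp x).card < l0 x := by
  rw [l0_eq_card_supp]
  refine card_lt_card ⟨inter_subset_right, fun hsub => h fun i hi => ?_⟩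
  exact (mem_inter.mp (hsub hi)).1

section TopNorm

variable (N : (Fin d → ℝ) → ℝ)

lemma topNorm_set_finite (k : ℕ) (x : Fin d → ℝ) :
    {r | ∃ K : Finset (Fin d), K.card ≤ k ∧ r = N (proj K x)}.Finite :=
  (Set.finite_range fun K : Finset (Fin d) => N (proj K x)).subset
    fun _ ⟨K, _, hr⟩ => ⟨K, hr.symm⟩

lemma topNorm_set_nonempty (k : ℕ) (x : Fin d → ℝ) :
    {r | ∃ K : Finset (Fin d), K.card ≤ k ∧ r = N (proj K x)}.Nonempty :=
  ⟨_, ∅, by simp, rfl⟩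

lemma le_topNorm {k : ℕ} (x : Fin d → ℝ) {K : Finset (Fin d)} (hK : K.card ≤ k) :
    N (proj K x) ≤ topNorm N k x :=
  le_csSup (topNorm_set_finite N k x).bddAbove ⟨K, hK, rfl⟩

lemma exists_topNorm_eq (k : ℕ) (x : Fin d → ℝ) :
    ∃ K : Finset (Fin d), K.card ≤ k ∧ topNorm N k x = N (proj K x) :=
  (topNorm_set_nonempty N k x).csSup_mem (topNorm_set_finite N k x)

lemma topNorm_mono {k m : ℕ} (h : k ≤ m) (x : Fin d → ℝ) :
    topNorm N k x ≤ topNorm N m x := by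
  obtain ⟨K, hK, hk⟩ := exists_topNorm_eq N k x
  exact hk ▸ le_topNorm N x (hK.trans h)

lemma le_topNorm_top (x : Fin d → ℝ) : N x ≤ topNorm N d x := by
  simpa [proj_eq_self_of_supp_subset (subset_univ _)] using
    le_topNorm N x (K := univ) (card_univ.trans_le (Fintype.card_fin d).le)

lemma topNorm_eq_top_of_l0_le {x : Fin d → ℝ} {l : ℕ} (hld : l ≤ d) (hl : l0 x ≤ l) :
    topNorm N l x = topNorm N d x := by
  refine (topNorm_mono N hld x).antisymm ?_
  obtain ⟨K, -, hK⟩ := exists_topNorm_eq N d x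
  rw [hK, ← proj_inter_supp]
  refine le_topNorm N x (le_trans ?_ hl)
  exact l0_eq_card_supp x ▸ card_le_card inter_subset_right

/-- The generalized top-`l` norms are strictly increasingly graded with respect to `l0`. -/
def IsStrictlyGraded : Prop :=
  ∀ (x : Fin d → ℝ) (l : ℕ), l ≤ d → (l0 x ≤ l ↔ topNorm N l x = topNorm N d x)

def ProjStrictlyDecreasing : Prop :=
  ∀ (x : Fin d → ℝ) (K : Finset (Fin d)), ¬ supp x ⊆ K → N (proj K x) < N x

variable {N}

lemma IsStrictlyGraded.topNorm_lt_top (G : IsStrictlyGraded N) {x : Fin d → ℝ} {l : ℕ}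
    (hl : l < l0 x) : topNorm N l x < topNorm N d x :=
  have hld : l ≤ d := hl.le.trans (l0_le x)
  (topNorm_mono N hld x).lt_of_ne fun h => hl.not_ge ((G x l hld).mpr h)

lemma IsStrictlyGraded.projStrictlyDecreasing (G : IsStrictlyGraded N) :
    ProjStrictlyDecreasing N := by
  have lt_top : ∀ (x : Fin d → ℝ) (K : Finset (Fin d)), ¬ supp x ⊆ K →
      N (proj K x) < topNorm N d x := fun x K h =>
    calc N (proj K x) = N (proj (K ∩ supp x) x) := by rw [proj_inter_supp]
      _ ≤ topNorm N (K ∩ supp x).card x := le_topNorm N x le_rfl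
      _ < topNorm N d x := G.topNorm_lt_top (card_inter_supp_lt_l0 h)
  have top_le : ∀ x : Fin d → ℝ, topNorm N d x ≤ N x := fun x => by
    obtain ⟨K, -, hK⟩ := exists_topNorm_eq N d x
    by_cases h : supp x ⊆ K
    · rw [hK, proj_eq_self_of_supp_subset h]
    · exact absurd (hK ▸ lt_top x K h) (lt_irrefl _)
  exact fun x K h => (lt_top x K h).trans_le (top_le x)

lemma ProjStrictlyDecreasing.isStrictlyGraded (P : ProjStrictlyDecreasing N) :
    IsStrictlyGraded N := by
  refine fun x l hld => ⟨topNorm_eq_top_of_l0_le N hld, fun h => ?_⟩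
  by_contra! hl
  obtain ⟨K, hKl, htop⟩ := exists_topNorm_eq N l x
  have hK : ¬ supp x ⊆ K := fun hsub => by
    have := Finset.card_le_card hsub
    rw [← l0_eq_card_supp] at this
    omega
  linarith [P x K hK, le_topNorm_top N x]

lemma isStrictlyGraded_iff_projStrictlyDecreasing :
    IsStrictlyGraded N ↔ ProjStrictlyDecreasing N :=
  ⟨IsStrictlyGraded.projStrictlyDecreasing, ProjStrictlyDecreasing.isStrictlyGraded⟩

end TopNorm

lemma OrthantStrictlyMonotonic.projStrictlyDecreasing {N : (Fin d → ℝ) → ℝ}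
    (hN : OrthantStrictlyMonotonic N) : ProjStrictlyDecreasing N := by
  intro x K h
  obtain ⟨j, hj, hjK⟩ := Finset.not_subset.mp h
  refine hN _ _ (fun i => ?_) ⟨j, ?_⟩ (fun i => ?_)
  · by_cases hi : i ∈ K <;> simp [proj, hi]
  · simpa [proj, hjK] using hj
  · by_cases hi : i ∈ K <;> simp [proj, hi, mul_self_nonneg]

lemma IsNorm.convexOn {N : (Fin d → ℝ) → ℝ} (hN : IsNorm N) : ConvexOn ℝ univ N := by
  obtain ⟨-, -, hsmul, hadd⟩ := hN
  refine ⟨convex_univ, fun x _ y _ a b ha hb _ => ?_⟩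
  calc N (a • x + b • y) ≤ N (a • x) + N (b • y) := hadd _ _
    _ = a • N x + b • N y := by rw [hsmul, hsmul, abs_of_nonneg ha, abs_of_nonneg hb]; rfl

lemma update_eq_smul_add_smul_proj_erase (x : Fin d → ℝ) (i : Fin d) {a t : ℝ}
    (ha : a = t * x i) :
    Function.update x i a = t • x + (1 - t) • proj (univ.erase i) x := by
  funext j
  by_cases hj : j = i
  · subst hj
    simp [proj, ha]
  · simp [proj, hj]
    ring

section SingleCoordinate

variable {N : (Fin d → ℝ) → ℝ}

lemma ProjStrictlyDecreasing.update_lt (P : ProjStrictlyDecreasing N) (hN : IsNorm N)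
    {x : Fin d → ℝ} {i : Fin d} {a : ℝ}
    (habs : |a| < |x i|) (hsgn : 0 ≤ a * x i) : N (Function.update x i a) < N x := by
  have hxi : x i ≠ 0 := abs_pos.mp ((abs_nonneg a).trans_lt habs)
  set t := a / x i with ht
  have ht0 : 0 ≤ t := by
    rw [ht, ← mul_div_mul_right a (x i) hxi]
    exact div_nonneg hsgn (mul_self_nonneg (x i))
  have ht1 : t < 1 := (le_abs_self t).trans_lt (by
    rw [abs_div]; exact (div_lt_one (abs_pos.mpr hxi)).mpr habs)
  have herase : N (proj (univ.erase i) x) < N x :=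
    P x _ fun h => by simpa using h (mem_supp.mpr hxi)
  calc N (Function.update x i a)
      = N (t • x + (1 - t) • proj (univ.erase i) x) := by
        rw [update_eq_smul_add_smul_proj_erase x i (div_mul_cancel₀ a hxi).symm]
    _ ≤ t * N x + (1 - t) * N (proj (univ.erase i) x) :=
        hN.convexOn.2 trivial trivial ht0 (by linarith) (add_sub_cancel t 1)
    _ < t * N x + (1 - t) * N x := by gcongr
    _ = N x := by ring

lemma ProjStrictlyDecreasing.update_le (P : ProjStrictlyDecreasing N) (hN : IsNorm N)
    {x : Fin d → ℝ} {i : Fin d} {a : ℝ}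
    (habs : |a| ≤ |x i|) (hsgn : 0 ≤ a * x i) : N (Function.update x i a) ≤ N x := by
  rcases habs.lt_or_eq with habs | habs
  · exact (P.update_lt hN habs hsgn).le
  · have : a = x i := by
      rcases abs_eq_abs.mp habs with h | h
      · exact h
      · nlinarith
    rw [this, Function.update_eq_self]

lemma ProjStrictlyDecreasing.orthantStrictlyMonotonic (P : ProjStrictlyDecreasing N)
    (hN : IsNorm N) : OrthantStrictlyMonotonic N := by
  intro x x' habs ⟨j, hj⟩ hsgn
  have piecewise_eq_update : ∀ (s : Finset (Fin d)) (i : Fin d), i ∉ s →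
      s.piecewise x' x = Function.update ((insert i s).piecewise x' x) i (x i) := by
    intro s i hi
    rw [Finset.piecewise_insert, Function.update_idem, ← s.piecewise_eq_of_notMem x' x hi,
      Function.update_eq_self]
  have grow : ∀ s : Finset (Fin d), N x ≤ N (s.piecewise x' x) := by
    intro s
    induction s using Finset.induction_on with
    | empty => simp
    | insert i s hi ih =>
      rw [piecewise_eq_update s i hi] at ih
      exact ih.trans (P.update_le hN (by simpa using habs i) (by simpa using hsgn i))
  calc N x ≤ N ((univ.erase j).piecewise x' x) := grow _
    _ = N (Function.update (Finset.univ.piecewise x' x) j (x j)) := by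
        rw [piecewise_eq_update _ j (notMem_erase j univ), insert_erase (mem_univ j)]
    _ < N (Finset.univ.piecewise x' x) := P.update_lt hN (by simpa using hj) (by simpa using hsgn j)
    _ = N x' := by rw [Finset.piecewise_univ]

end SingleCoordinate

lemma isStrictlyGraded_iff_orthantStrictlyMonotonic {N : (Fin d → ℝ) → ℝ} (hN : IsNorm N) :
    IsStrictlyGraded N ↔ OrthantStrictlyMonotonic N :=
  isStrictlyGraded_iff_projStrictlyDecreasing.trans
    ⟨fun P => P.orthantStrictlyMonotonic hN, OrthantStrictlyMonotonic.projStrictlyDecreasing⟩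

theorem dual_osm_and_strictly_graded_iff_both_osm_general
    (N : (Fin d → ℝ) → ℝ) (hN : IsNorm N) :
    (OrthantStrictlyMonotonic (dualNorm N) ∧
      ∀ (x : Fin d → ℝ) (l : ℕ), l ≤ d →
        (l0 x ≤ l ↔ topNorm N l x = topNorm N d x)) ↔
    (OrthantStrictlyMonotonic N ∧ OrthantStrictlyMonotonic (dualNorm N)) :=
  (and_congr_right' (isStrictlyGraded_iff_orthantStrictlyMonotonic hN)).trans and_comm

/-- the dual norm is orthant-strictly monotonic together with the
sequence of generalized top-k norms being strictly increasingly graded w.r.t.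
ℓ0, if and only if both the norm and its dual norm are orthant-strictly
monotonic. -/
theorem dual_osm_and_strictly_graded_iff_both_osm
    (hd : 0 < d) (N : (Fin d → ℝ) → ℝ) (hN : IsNorm N) :
    (OrthantStrictlyMonotonic (dualNorm N) ∧
      ∀ (x : Fin d → ℝ) (l : ℕ), l ≤ d →
        (l0 x ≤ l ↔ topNorm N l x = topNorm N d x)) ↔
    (OrthantStrictlyMonotonic N ∧ OrthantStrictlyMonotonic (dualNorm N)) :=
  dual_osm_and_strictly_graded_iff_both_osm_general N hN

end OSMPaper
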